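/- arXiv:2112.13319 — 3 statements merged into one kernel-verified Lean document; each statement's English description precedes it below -/
import Mathlib

section
/- For any subset S of vertices of a complete directed weighted graph, vertices v,u ∈ S, and integer k with 1 ≤ k ≤ |S|, the maximum weight L(S,v,u) of a path visiting every vertex of S exactly once, starting at v and ending at u, satisfies L(S,v,u) = max over subsets S' ⊆ S with |S'| = k, v ∈ S', and over y ∈ S', of L(S',v,y) + L((S \ S') ∪ {y}, y, u), where L is -∞ when no such path exists. -/
/-!
Cutting a spanning path from `v` to `u` after its `k`-th vertex `y` gives a spanning path of its
first `k` vertices from `v` to `y` and one of the remaining vertices plus `y` from `y` to `u`, and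
the weight splits accordingly; conversely, two such paths glue at `y` into a spanning path of `S`.
Hence each side of the identity bounds the other.
-/

/-- Total weight of a path given as a list of vertices: sum of weights of consecutive edges. -/
def pathWeight {V : Type*} (w : V → V → ℝ) (p : List V) : ℝ :=
  ((p.zip p.tail).map (fun e => w e.1 e.2)).sum

/-- `L w S v u` is the maximum (as a supremum in `EReal`, so `⊥ = -∞` when no path exists)
of the weights of paths that visit every vertex of `S` exactly once, start at `v`
and end at `u`. -/
noncomputable def maxPathWeight {V : Type*} [DecidableEq V] (w : V → V → ℝ)
    (S : Finset V) (v u : V) : EReal :=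
  sSup {x : EReal | ∃ p : List V, p.Nodup ∧ p.toFinset = S ∧
    p.head? = some v ∧ p.getLast? = some u ∧ x = (pathWeight w p : EReal)}

namespace List

variable {α : Type*}

theorem getLast?_append_of_getLast?_eq {a : List α} {y : α} (hy : a.getLast? = some y)
    (b : List α) : (a ++ b).getLast? = (y :: b).getLast? := by
  rw [getLast?_append, getLast?_cons, hy]
  cases b.getLast? <;> rfl

theorem head?_append_of_head?_eq {a : List α} {v : α} (hv : a.head? = some v) (b : List α) :
    (a ++ b).head? = some v := by
  rw [head?_append, hv]
  rfl

end List

section PathWeight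

variable {V : Type*} (w : V → V → ℝ)

theorem pathWeight_cons_cons (x y : V) (l : List V) :
    pathWeight w (x :: y :: l) = w x y + pathWeight w (y :: l) := by
  simp [pathWeight]

theorem pathWeight_append {a : List V} {y : V} (hy : a.getLast? = some y) (b : List V) :
    pathWeight w (a ++ b) = pathWeight w a + pathWeight w (y :: b) := by
  induction a with
  | nil => simp at hy
  | cons x a ih =>
    cases a with
    | nil =>
      obtain rfl : x = y := by simpa using hy
      simp [pathWeight]
    | cons z a =>
      rw [List.getLast?_cons_cons] at hy
      simp only [List.cons_append, pathWeight_cons_cons] at ih ⊢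
      rw [ih hy, add_assoc]

end PathWeight

section SpanningPath

variable {V : Type*} [DecidableEq V]

def IsSpanningPath (S : Finset V) (v u : V) (p : List V) : Prop :=
  p.Nodup ∧ p.toFinset = S ∧ p.head? = some v ∧ p.getLast? = some u

namespace IsSpanningPath

variable {S A B : Finset V} {v u y : V} {p a b : List V}

theorem card_eq (hp : IsSpanningPath S v u p) : S.card = p.length := by
  rw [← hp.2.1, List.toFinset_card_of_nodup hp.1]

theorem left_mem (hp : IsSpanningPath S v u p) : v ∈ S :=
  hp.2.1 ▸ List.mem_toFinset.2 (List.mem_of_mem_head? hp.2.2.1)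

theorem right_mem (hp : IsSpanningPath S v u p) : u ∈ S :=
  hp.2.1 ▸ List.mem_toFinset.2 (List.mem_of_mem_getLast? hp.2.2.2)

theorem append (ha : IsSpanningPath A v y a) (hb : IsSpanningPath B y u (y :: b))
    (hAB : A ∩ B ⊆ {y}) : IsSpanningPath (A ∪ B) v u (a ++ b) := by
  obtain ⟨ha_nodup, rfl, ha_head, ha_last⟩ := ha
  obtain ⟨hb_nodup, rfl, -, hb_last⟩ := hb
  rw [List.nodup_cons] at hb_nodup
  refine ⟨List.nodup_append.2 ⟨ha_nodup, hb_nodup.2, ?_⟩, ?_,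
    List.head?_append_of_head?_eq ha_head b, by rwa [List.getLast?_append_of_getLast?_eq ha_last]⟩
  · rintro z hza _ hzb rfl
    have : z = y := by simpa [hza, hzb] using @hAB z
    exact hb_nodup.1 (this ▸ hzb)
  · have : y ∈ a.toFinset := List.mem_toFinset.2 (List.mem_of_mem_getLast? ha_last)
    rw [List.toFinset_append, List.toFinset_cons, Finset.union_insert, Finset.insert_eq_of_mem]
    exact Finset.mem_union_left _ this

theorem of_append (hp : IsSpanningPath S v u (a ++ b)) (hy : a.getLast? = some y) :
    IsSpanningPath a.toFinset v y a ∧ IsSpanningPath ((S \ a.toFinset) ∪ {y}) y u (y :: b) := by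
  obtain ⟨hp_nodup, rfl, hp_head, hp_last⟩ := hp
  obtain ⟨ha_nodup, hb_nodup, hab⟩ := List.nodup_append.1 hp_nodup
  have hya : y ∈ a := List.mem_of_mem_getLast? hy
  refine ⟨⟨ha_nodup, rfl, ?_, hy⟩, ⟨?_, ?_, rfl, ?_⟩⟩
  · obtain ⟨x, a, rfl⟩ := List.exists_cons_of_ne_nil (List.ne_nil_of_mem hya)
    simpa using hp_head
  · exact List.nodup_cons.2 ⟨fun hyb => hab y hya y hyb rfl, hb_nodup⟩
  · ext z
    simp only [List.toFinset_cons, List.toFinset_append, Finset.mem_insert, Finset.mem_union,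
      Finset.mem_sdiff, Finset.mem_singleton, List.mem_toFinset]
    have := fun hza hzb => hab z hza z hzb rfl
    tauto
  · rwa [← List.getLast?_append_of_getLast?_eq hy]

end IsSpanningPath

theorem maxPathWeight_eq_sSup_image (w : V → V → ℝ) (S : Finset V) (v u : V) :
    maxPathWeight w S v u =
      sSup ((fun p ↦ (pathWeight w p : EReal)) '' {p | IsSpanningPath S v u p}) := by
  unfold maxPathWeight IsSpanningPath
  congr 1
  ext x
  simp only [Set.mem_image, Set.mem_ofPred_eq, and_assoc, eq_comm]

end SpanningPath

section MaxPathWeight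

variable {V : Type*} [DecidableEq V] (w : V → V → ℝ)

theorem IsSpanningPath.le_maxPathWeight {S : Finset V} {v u : V} {p : List V}
    (hp : IsSpanningPath S v u p) : (pathWeight w p : EReal) ≤ maxPathWeight w S v u := by
  rw [maxPathWeight_eq_sSup_image]
  exact le_sSup (Set.mem_image_of_mem _ hp)

theorem maxPathWeight_le {S : Finset V} {v u : V} {x : EReal}
    (h : ∀ p, IsSpanningPath S v u p → (pathWeight w p : EReal) ≤ x) :
    maxPathWeight w S v u ≤ x := by
  rw [maxPathWeight_eq_sSup_image]
  exact sSup_le (Set.forall_mem_image.2 h)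

theorem maxPathWeight_add_maxPathWeight_le {A B : Finset V} {v y u : V} (hAB : A ∩ B ⊆ {y}) :
    maxPathWeight w A v y + maxPathWeight w B y u ≤ maxPathWeight w (A ∪ B) v u := by
  -- Approximating both suprema from below avoids having to show that they are attained.
  refine EReal.add_le_of_forall_lt fun c hc d hd => ?_
  rw [maxPathWeight_eq_sSup_image, lt_sSup_iff] at hc hd
  obtain ⟨_, ⟨a, ha, rfl⟩, hca⟩ := hc
  obtain ⟨_, ⟨b, hb, rfl⟩, hdb⟩ := hd
  obtain ⟨t, rfl⟩ : ∃ t, b = y :: t := ⟨_, List.eq_cons_of_mem_head? hb.2.2.1⟩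
  calc c + d ≤ (pathWeight w a + pathWeight w (y :: t) : ℝ) := by
        rw [EReal.coe_add]
        exact add_le_add hca.le hdb.le
    _ = pathWeight w (a ++ t) := by rw [pathWeight_append w ha.2.2.2]
    _ ≤ maxPathWeight w (A ∪ B) v u := (ha.append hb hAB).le_maxPathWeight w

end MaxPathWeight

theorem stmt_0_general {V : Type*} [DecidableEq V] (w : V → V → ℝ)
    (S : Finset V) (v u : V) (k : ℕ)
    (hk1 : 1 ≤ k) (hk2 : k ≤ S.card) :
    maxPathWeight w S v u =
      sSup {x : EReal | ∃ S' : Finset V, S' ⊆ S ∧ S'.card = k ∧ v ∈ S' ∧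
        ∃ y ∈ S', x = maxPathWeight w S' v y +
          maxPathWeight w ((S \ S') ∪ {y}) y u} := by
  apply le_antisymm
  · refine maxPathWeight_le w fun p hp => ?_
    have hk : (p.take k).length = k := List.length_take_of_le (hp.card_eq ▸ hk2)
    obtain ⟨y, hy⟩ : ∃ y, (p.take k).getLast? = some y :=
      ⟨_, List.getLast?_eq_some_getLast (List.ne_nil_of_length_pos (by omega))⟩
    rw [← List.take_append_drop k p] at hp ⊢
    obtain ⟨ha, hb⟩ := hp.of_append hy
    refine le_sSup_of_le ⟨_, ?_, by rw [ha.card_eq, hk], ha.left_mem, y, ha.right_mem, rfl⟩ ?_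
    · rw [← hp.2.1, List.toFinset_append]
      exact Finset.subset_union_left
    · rw [pathWeight_append w hy, EReal.coe_add]
      exact add_le_add (ha.le_maxPathWeight w) (hb.le_maxPathWeight w)
  · refine sSup_le ?_
    rintro _ ⟨S', hS', -, -, y, hy, rfl⟩
    have hS : S' ∪ ((S \ S') ∪ {y}) = S := by
      rw [← Finset.union_assoc, Finset.union_sdiff_of_subset hS',
        Finset.union_eq_left.2 (Finset.singleton_subset_iff.2 (hS' hy))]
    have hAB : S' ∩ ((S \ S') ∪ {y}) ⊆ {y} := by
      intro z
      simp +contextual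
    simpa only [hS] using maxPathWeight_add_maxPathWeight_le w hAB

theorem stmt_0 {V : Type*} [DecidableEq V] (w : V → V → ℝ)
    (S : Finset V) (v u : V) (k : ℕ)
    (hv : v ∈ S) (hu : u ∈ S) (hk1 : 1 ≤ k) (hk2 : k ≤ S.card) :
    maxPathWeight w S v u =
      sSup {x : EReal | ∃ S' : Finset V, S' ⊆ S ∧ S'.card = k ∧ v ∈ S' ∧
        ∃ y ∈ S', x = maxPathWeight w S' v y +
          maxPathWeight w ((S \ S') ∪ {y}) y u} :=
  stmt_0_general w S v u k hk1 hk2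
end

section
/- Let S = (s¹, …, sⁿ) be distinct strings with no sᵢ a substring of sⱼ for i ≠ j, and let t be any string containing every sᵢ as a substring. Then there exists a permutation (i₁, …, iₙ) ordering the strings by the starting positions of chosen occurrences in t, and |t| ≥ Σⱼ |s^{i_j}| − Σ_{j=2}^{n} overlap(s^{i_{j-1}}, s^{i_j}). -/
/-- `overlap s t` is the length of the longest suffix of `s` that is a prefix of `t`. -/
def overlap {α : Type*} [DecidableEq α] (s t : List α) : ℕ :=
  Nat.findGreatest (fun z => s.drop (s.length - z) = t.take z) (min s.length t.length)

/-- Merge a list of strings by successively appending, for each next string,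
only its part that does not overlap (maximally) with the previous string. -/
def mergeList {α : Type*} [DecidableEq α] : List (List α) → List α
  | [] => []
  | [x] => x
  | x :: y :: rest => x ++ (mergeList (y :: rest)).drop (overlap x y)

/-- Sum of the overlaps of consecutive strings in a list. -/
def overlapSum {α : Type*} [DecidableEq α] (l : List (List α)) : ℕ :=
  ((l.zip l.tail).map (fun p => overlap p.1 p.2)).sum
theorem stmt_5 {α : Type*} [DecidableEq α] (n : ℕ) (s : Fin n → List α)
    (hinj : Function.Injective s)
    (hnosub : ∀ i j, i ≠ j → ¬ (s i).IsInfix (s j))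
    (t : List α) (ht : ∀ i, (s i).IsInfix t) :
    ∃ l : List (List α), l.Perm (List.ofFn s) ∧
      (l.map List.length).sum ≤ t.length + overlapSum l := by
  -- choose occurrence positions
  have hpos : ∀ i, ∃ q : ℕ, s i = (t.drop q).take (s i).length ∧
      q + (s i).length ≤ t.length := by
    intro i
    obtain ⟨u, v, huv⟩ := ht i
    refine ⟨u.length, ?_, ?_⟩
    · have hd : t.drop u.length = s i ++ v := by
        rw [← huv, List.append_assoc, List.drop_left]
      rw [hd, List.take_left]
    · have := congrArg List.length huv
      simp [List.length_append] at this
      omega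
  choose p hp1 hp2 using hpos
  -- p is injective
  have hpinj : Function.Injective p := by
    intro i j hij
    by_contra hne
    have h1 : s i <+: t.drop (p i) := by
      rw [hp1 i]; exact List.take_prefix _ _
    have h2 : s j <+: t.drop (p i) := by
      rw [hij, hp1 j]; exact List.take_prefix _ _
    rcases List.prefix_or_prefix_of_prefix h1 h2 with h | h
    · exact hnosub i j hne h.isInfix
    · exact hnosub j i (Ne.symm hne) h.isInfix
  -- key geometric lemma
  have key : ∀ a b : Fin n, p a < p b →
      p a + (s a).length ≤ p b + overlap (s a) (s b) := by
    intro a b hab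
    have hne : a ≠ b := fun h => absurd (congrArg p h) (Nat.ne_of_lt hab)
    obtain ⟨La, hLa⟩ : ∃ La, (s a).length = La := ⟨_, rfl⟩
    obtain ⟨Lb, hLb⟩ : ∃ Lb, (s b).length = Lb := ⟨_, rfl⟩
    have ha' : s a = (t.drop (p a)).take La := by rw [← hLa]; exact hp1 a
    have hb' : s b = (t.drop (p b)).take Lb := by rw [← hLb]; exact hp1 b
    have hta := hp2 a
    have htb := hp2 b
    rw [hLa] at hta; rw [hLb] at htb
    -- ending positions are ordered
    have hend : p a + La ≤ p b + Lb := by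
      by_contra hcon
      push_neg at hcon
      apply hnosub b a hne.symm
      have h1 : s b = ((s a).drop (p b - p a)).take Lb := by
        rw [ha', List.drop_take, List.drop_drop,
          Nat.add_sub_cancel' (le_of_lt hab), List.take_take,
          min_eq_left (by omega), hb']
      rw [h1]
      exact (List.take_prefix _ _).isInfix.trans (List.drop_suffix _ _).isInfix
    by_cases hle : p a + (s a).length ≤ p b
    · exact le_trans hle (Nat.le_add_right _ _)
    · rw [hLa] at hle ⊢
      push_neg at hle
      have hk1 : p a + La - p b ≤ La := by omega
      have hk2 : p a + La - p b ≤ Lb := by omega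
      have hpred : (s a).drop ((s a).length - (p a + La - p b)) =
          (s b).take (p a + La - p b) := by
        rw [hLa]
        conv_lhs => rw [ha']
        conv_rhs => rw [hb']
        rw [List.drop_take, List.drop_drop, List.take_take,
          min_eq_left hk2]
        have e1 : La - (La - (p a + La - p b)) = p a + La - p b := by omega
        have e2 : p a + (La - (p a + La - p b)) = p b := by omega
        rw [e1, e2]
      have hov : p a + La - p b ≤ overlap (s a) (s b) := by
        apply Nat.le_findGreatest _ hpred
        rw [hLa, hLb]
        exact le_min hk1 hk2
      omega
  -- main induction over a sorted chain of indices
  have main : ∀ (is : List (Fin n)) (a : Fin n),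
      (a :: is).Pairwise (fun i j => p i < p j) →
      (((a :: is).map s).map List.length).sum + p a ≤
        t.length + overlapSum ((a :: is).map s) := by
    intro is
    induction is with
    | nil =>
      intro a _
      have := hp2 a
      simp [overlapSum]
      omega
    | cons b rest ih =>
      intro a hpw
      have hab : p a < p b :=
        List.rel_of_pairwise_cons hpw List.mem_cons_self
      have h1 := ih b (List.pairwise_cons.mp hpw).2
      have hkey := key a b hab
      have hsum : overlapSum (s a :: s b :: rest.map s) =
          overlap (s a) (s b) + overlapSum (s b :: rest.map s) := by
        simp [overlapSum]
      simp only [List.map_cons, List.sum_cons] at h1 ⊢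
      omega
  -- assemble
  set is := (List.finRange n).mergeSort (fun i j => decide (p i ≤ p j)) with his
  have hperm : is.Perm (List.finRange n) := List.mergeSort_perm _ _
  have hsorted : is.Pairwise (fun i j => (decide (p i ≤ p j)) = true) :=
    List.pairwise_mergeSort
      (by intro a b c h1 h2; simp at h1 h2 ⊢; omega)
      (by intro a b; simp; omega) _
  have hnodup : is.Nodup := hperm.nodup_iff.mpr (List.nodup_finRange n)
  have hpw : is.Pairwise (fun i j => p i < p j) := by
    refine (hsorted.and hnodup).imp ?_
    intro i j ⟨h1, h2⟩
    simp at h1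
    exact lt_of_le_of_ne h1 fun e => h2 (hpinj e)
  have main' : ∀ (js : List (Fin n)), js.Pairwise (fun i j => p i < p j) →
      ((js.map s).map List.length).sum ≤ t.length + overlapSum (js.map s) := by
    intro js hjs
    cases js with
    | nil => simp [overlapSum]
    | cons a tl =>
      have := main tl a hjs
      omega
  exact ⟨is.map s, by rw [List.ofFn_eq_map]; exact hperm.map s, main' is hpw⟩
end

section
/- Combining the two previous facts: for distinct strings s¹,…,sⁿ with no sᵢ a substring of sⱼ (i ≠ j), the minimal length of a common superstring equals Σᵢ |sᵢ| minus the maximum over permutations π of Σ_{j=2}^{n} overlap(s^{π(j-1)}, s^{π(j)}). Equivalently, the shortest superstring length equals the total length minus the maximum-weight Hamiltonian path weight in the overlap graph. -/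
/-! Merging the strings in any order, each glued onto its predecessor along their overlap,
gives a superstring of length `∑ |sᵢ| - overlapSum`. Conversely, in a superstring `t` order the
strings by the starting positions of chosen occurrences: since no string is an infix of another,
starts and ends both increase, so consecutive occurrences share at most `overlap` letters of `t`
and `|t| ≥ ∑ |sᵢ| - overlapSum` for that order. -/

section Overlap

variable {α : Type*} [DecidableEq α]

lemma overlap_le_length_left (x y : List α) : overlap x y ≤ x.length :=
  (Nat.findGreatest_le _).trans (min_le_left _ _)

lemma overlap_le_length_right (x y : List α) : overlap x y ≤ y.length :=
  (Nat.findGreatest_le _).trans (min_le_right _ _)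

lemma drop_overlap_eq_take_overlap (x y : List α) :
    x.drop (x.length - overlap x y) = y.take (overlap x y) :=
  Nat.findGreatest_spec (P := fun z => x.drop (x.length - z) = y.take z) (Nat.zero_le _) (by simp)

lemma le_overlap {x y : List α} {z : ℕ} (hx : z ≤ x.length) (hy : z ≤ y.length)
    (h : x.drop (x.length - z) = y.take z) : z ≤ overlap x y :=
  Nat.le_findGreatest (le_min hx hy) h

lemma overlapSum_cons_cons (x y : List α) (l : List (List α)) :
    overlapSum (x :: y :: l) = overlap x y + overlapSum (y :: l) := by
  simp [overlapSum]

end Overlap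

section Merge

variable {α : Type*} [DecidableEq α]

lemma prefix_mergeList (x : List α) (l : List (List α)) : x <+: mergeList (x :: l) := by
  cases l with
  | nil => simp [mergeList]
  | cons y l => exact ⟨_, rfl⟩

lemma mergeList_cons_cons (x y : List α) (l : List (List α)) :
    mergeList (x :: y :: l) = x.take (x.length - overlap x y) ++ mergeList (y :: l) := by
  obtain ⟨u, hu⟩ := prefix_mergeList y l
  have hshared : x.drop (x.length - overlap x y) = (mergeList (y :: l)).take (overlap x y) := by
    rw [drop_overlap_eq_take_overlap, ← hu,
      List.take_append_of_le_length (overlap_le_length_right x y)]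
  calc mergeList (x :: y :: l)
      = x.take (x.length - overlap x y) ++
          (x.drop (x.length - overlap x y) ++ (mergeList (y :: l)).drop (overlap x y)) := by
        rw [← List.append_assoc, List.take_append_drop]; rfl
    _ = _ := by rw [hshared, List.take_append_drop]

lemma infix_mergeList_of_mem {l : List (List α)} {x : List α} (hx : x ∈ l) :
    x <:+: mergeList l := by
  induction l with
  | nil => simp at hx
  | cons y l ih =>
    rcases List.mem_cons.1 hx with rfl | hx
    · exact (prefix_mergeList x l).isInfix
    · cases l with
      | nil => simp at hx
      | cons z l =>
        rw [mergeList_cons_cons]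
        exact (ih hx).trans (List.suffix_append _ _).isInfix

lemma length_mergeList_add_overlapSum (l : List (List α)) :
    (mergeList l).length + overlapSum l = (l.map List.length).sum := by
  induction l with
  | nil => rfl
  | cons x l ih =>
    cases l with
    | nil => simp [mergeList, overlapSum]
    | cons y l =>
      have := overlap_le_length_left x y
      rw [mergeList_cons_cons, overlapSum_cons_cons, List.length_append, List.length_take]
      simp only [List.map_cons, List.sum_cons] at ih ⊢
      omega

end Merge

section Occurrences

variable {α : Type*}

def OccursAt (x t : List α) (p : ℕ) : Prop := ∃ u v, t = u ++ x ++ v ∧ u.length = p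

lemma exists_occursAt_of_infix {x t : List α} (h : x <:+: t) : ∃ p, OccursAt x t p := by
  obtain ⟨u, v, rfl⟩ := h
  exact ⟨u.length, u, v, rfl, rfl⟩

lemma OccursAt.take_drop_eq {x t : List α} {p : ℕ} (hx : OccursAt x t p) :
    (t.drop p).take x.length = x := by
  obtain ⟨u, v, rfl, rfl⟩ := hx
  simp

lemma OccursAt.add_length_le {x t : List α} {p : ℕ} (hx : OccursAt x t p) :
    p + x.length ≤ t.length := by
  obtain ⟨u, v, rfl, rfl⟩ := hx
  simp

lemma OccursAt.infix_of_le {x y t : List α} {p q : ℕ} (hx : OccursAt x t p) (hy : OccursAt y t q)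
    (hpq : p ≤ q) (hend : q + y.length ≤ p + x.length) : y <:+: x := by
  have hy' : (x.drop (q - p)).take y.length = y := by
    calc (x.drop (q - p)).take y.length
        = (((t.drop p).take x.length).drop (q - p)).take y.length := by rw [hx.take_drop_eq]
      _ = y := by
        rw [List.drop_take, List.drop_drop, List.take_take, min_eq_left (by omega),
          Nat.add_sub_cancel' hpq, hy.take_drop_eq]
  rw [← hy']
  exact (List.take_prefix _ _).isInfix.trans (List.drop_suffix _ _).isInfix

lemma OccursAt.add_length_le_add_overlap [DecidableEq α] {x y t : List α} {p q : ℕ}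
    (hx : OccursAt x t p) (hy : OccursAt y t q) (hpq : p < q)
    (hend : p + x.length ≤ q + y.length) : p + x.length ≤ q + overlap x y := by
  by_cases hsep : p + x.length ≤ q
  · omega
  set z := p + x.length - q with hz
  have hsuffix : x.drop (x.length - z) = (t.drop q).take z := by
    calc x.drop (x.length - z)
        = ((t.drop p).take x.length).drop (x.length - z) := by rw [hx.take_drop_eq]
      _ = (t.drop q).take z := by
        rw [List.drop_take, List.drop_drop, Nat.sub_sub_self (by omega),
          show p + (x.length - z) = q by omega]
  have hprefix : y.take z = (t.drop q).take z := by
    calc y.take z = ((t.drop q).take y.length).take z := by rw [hy.take_drop_eq]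
      _ = (t.drop q).take z := by rw [List.take_take, min_eq_left (by omega)]
  have := le_overlap (by omega) (by omega) (hsuffix.trans hprefix.symm)
  omega

end Occurrences

section LowerBound

variable {α : Type*} [DecidableEq α]

lemma sum_length_le_overlapSum_add_length (t : List α) (L : List (List α × ℕ))
    (hocc : ∀ a ∈ L, OccursAt a.1 t a.2)
    (hchain : L.IsChain (fun a b => a.2 < b.2 ∧ ¬ b.1 <:+: a.1)) :
    ((L.map Prod.fst).map List.length).sum ≤ overlapSum (L.map Prod.fst) + t.length := by
  suffices key : ∀ a L, (∀ b ∈ a :: L, OccursAt b.1 t b.2) →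
      (a :: L).IsChain (fun a b => a.2 < b.2 ∧ ¬ b.1 <:+: a.1) →
      (((a :: L).map Prod.fst).map List.length).sum + a.2 ≤
        overlapSum ((a :: L).map Prod.fst) + t.length by
    cases L with
    | nil => simp
    | cons a L => exact (Nat.le_add_right _ _).trans (key a L hocc hchain)
  intro a L
  induction L generalizing a with
  | nil =>
    intro hocc _
    have := (hocc a (by simp)).add_length_le
    simp only [List.map_cons, List.map_nil, List.sum_cons, List.sum_nil]
    exact le_of_eq_of_le (by ring) (this.trans (Nat.le_add_left _ _))
  | cons b L ih =>
    intro hocc hchain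
    obtain ⟨⟨hlt, hninfix⟩, hchain⟩ := List.isChain_cons_cons.1 hchain
    have ha := hocc a (by simp)
    have hb := hocc b (by simp)
    have hend : a.2 + a.1.length ≤ b.2 + b.1.length := by
      by_contra! h
      exact hninfix (ha.infix_of_le hb hlt.le h.le)
    have := ha.add_length_le_add_overlap hb hlt hend
    have := ih b (fun c hc => hocc c (List.mem_cons_of_mem _ hc)) hchain
    simp only [List.map_cons, List.sum_cons, overlapSum_cons_cons] at this ⊢
    omega

lemma exists_perm_sum_length_le_overlapSum_add_length {n : ℕ} (s : Fin n → List α)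
    (hnosub : ∀ i j, i ≠ j → ¬ s i <:+: s j) (t : List α) (ht : ∀ i, s i <:+: t) :
    ∃ l ∈ (List.ofFn s).permutations, ∑ i, (s i).length ≤ overlapSum l + t.length := by
  choose p hp using fun i => exists_occursAt_of_infix (ht i)
  have hpinj : Function.Injective p := by
    intro i j hij
    by_contra hne
    rcases le_total (s i).length (s j).length with hl | hl
    · exact hnosub i j hne ((hp j).infix_of_le (hp i) hij.ge (by omega))
    · exact hnosub j i (Ne.symm hne) ((hp i).infix_of_le (hp j) hij.le (by omega))
  set σ := Tuple.sort p
  have hmono : StrictMono (p ∘ σ) :=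
    (Tuple.monotone_sort p).strictMono_of_injective (hpinj.comp σ.injective)
  set L := List.ofFn fun k => (s (σ k), p (σ k))
  have hchain : L.IsChain (fun a b => a.2 < b.2 ∧ ¬ b.1 <:+: a.1) := by
    refine List.isChain_ofFn.2 fun i hi => ⟨hmono (Fin.mk_lt_mk.2 i.lt_succ_self), ?_⟩
    exact hnosub _ _ (σ.injective.ne (Fin.ne_of_val_ne (Nat.succ_ne_self i)))
  have hfst : L.map Prod.fst = List.ofFn (s ∘ σ) := by
    simp only [L, List.map_ofFn]; rfl
  have hsum : ((List.ofFn (s ∘ σ)).map List.length).sum = ∑ i, (s i).length := by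
    rw [List.map_ofFn, List.sum_ofFn]
    exact Equiv.sum_comp σ fun i => (s i).length
  refine ⟨List.ofFn (s ∘ σ), List.mem_permutations.2 (σ.ofFn_comp_perm s), ?_⟩
  have := sum_length_le_overlapSum_add_length t L
    (fun a ha => by obtain ⟨k, rfl⟩ := List.mem_ofFn.1 ha; exact hp _) hchain
  rwa [hfst, hsum] at this

end LowerBound

section Superstring

variable {α : Type*} [DecidableEq α]

lemma infix_mergeList_of_perm {n : ℕ} {s : Fin n → List α} {l : List (List α)}
    (hl : l.Perm (List.ofFn s)) (i : Fin n) : s i <:+: mergeList l :=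
  infix_mergeList_of_mem (hl.mem_iff.2 (List.mem_ofFn.2 ⟨i, rfl⟩))

lemma length_mergeList_add_overlapSum_of_perm {n : ℕ} {s : Fin n → List α} {l : List (List α)}
    (hl : l.Perm (List.ofFn s)) :
    (mergeList l).length + overlapSum l = ∑ i, (s i).length := by
  rw [length_mergeList_add_overlapSum, (hl.map List.length).sum_eq, List.map_ofFn, List.sum_ofFn]
  rfl

end Superstring

theorem stmt_6_general {α : Type*} [DecidableEq α] (n : ℕ) (s : Fin n → List α)
    (hnosub : ∀ i j, i ≠ j → ¬ (s i).IsInfix (s j)) :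
    sInf {m : ℕ | ∃ t : List α, (∀ i, (s i).IsInfix t) ∧ t.length = m} =
      (∑ i, (s i).length) -
        ((List.ofFn s).permutations.map overlapSum).foldr max 0 := by
  set S := {m : ℕ | ∃ t : List α, (∀ i, (s i).IsInfix t) ∧ t.length = m}
  have hmerge : ∀ l ∈ (List.ofFn s).permutations, (mergeList l).length ∈ S := fun l hl =>
    ⟨_, infix_mergeList_of_perm (List.mem_permutations.1 hl), rfl⟩
  have hid : List.ofFn s ∈ (List.ofFn s).permutations := List.mem_permutations.2 (.refl _)
  apply le_antisymm
  · have hbound :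
        ∀ l ∈ (List.ofFn s).permutations, sInf S + overlapSum l ≤ ∑ i, (s i).length :=
      fun l hl => (length_mergeList_add_overlapSum_of_perm (List.mem_permutations.1 hl)) ▸
        Nat.add_le_add_right (Nat.sInf_le (hmerge l hl)) _
    have hmax : ((List.ofFn s).permutations.map overlapSum).foldr max 0 ≤
        (∑ i, (s i).length) - sInf S :=
      List.max_le_of_forall_le _ _ (by simpa using fun l hl => Nat.le_sub_of_add_le' (hbound l hl))
    have := hbound _ hid
    omega
  · refine le_csInf ⟨_, hmerge _ hid⟩ ?_
    rintro _ ⟨t, ht, rfl⟩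
    obtain ⟨l, hl, hlen⟩ := exists_perm_sum_length_le_overlapSum_add_length s hnosub t ht
    have : overlapSum l ≤ ((List.ofFn s).permutations.map overlapSum).foldr max 0 :=
      List.le_max_of_le (List.mem_map_of_mem hl) le_rfl
    omega

theorem stmt_6 {α : Type*} [DecidableEq α] (n : ℕ) (s : Fin n → List α)
    (hinj : Function.Injective s)
    (hnosub : ∀ i j, i ≠ j → ¬ (s i).IsInfix (s j)) :
    sInf {m : ℕ | ∃ t : List α, (∀ i, (s i).IsInfix t) ∧ t.length = m} =
      (∑ i, (s i).length) -
        ((List.ofFn s).permutations.map overlapSum).foldr max 0 :=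
  stmt_6_general n s hnosub
end
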